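/- arXiv:quant-ph/0608227 — 2 statements merged into one kernel-verified Lean document; each statement's English description precedes it below -/
import Mathlib

section
/- Let W = Σ_{i,j=1}^n E_{ij} ⊗ W_{ij} be a unitary element of M_n(ℂ) ⊗ M_n(ℂ), where E_{ij} are the matrix units of the first factor and W_{ij} ∈ M_n(ℂ). Then the subalgebra W(ℂI ⊗ M_n(ℂ))W* is complementary to ℂI ⊗ M_n(ℂ) if and only if the family {W_{ij} : 1 ≤ i,j ≤ n} is an orthonormal basis of M_n(ℂ) with respect to the inner product ⟨A,B⟩ = Tr(A*B). -/
open scoped Kronecker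
open Matrix

noncomputable section

/-- The normalized Hilbert–Schmidt inner product `⟨x, y⟩ = τ(x* y)` on `M_m(ℂ)`,
where `τ` is the normalized trace. -/
def hsInner {m : Type*} [Fintype m] [DecidableEq m] (x y : Matrix m m ℂ) : ℂ :=
  (star x * y).trace / (Fintype.card m : ℂ)

namespace CompAux

variable {n : ℕ} (W : Fin n → Fin n → Matrix (Fin n) (Fin n) ℂ)

lemma kron_conjT (X : Matrix (Fin n) (Fin n) ℂ) (Y : Matrix (Fin n) (Fin n) ℂ) :
    (X ⊗ₖ Y)ᴴ = Xᴴ ⊗ₖ Yᴴ := by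
  ext ⟨a,b⟩ ⟨c,d⟩
  simp [conjTranspose_apply, kroneckerMap_apply]

lemma stdB_conjT (i j : Fin n) :
    (Matrix.single i j (1:ℂ))ᴴ = Matrix.single j i (1:ℂ) := by
  ext a b
  by_cases h : j = a ∧ i = b
  · obtain ⟨rfl, rfl⟩ := h; simp
  · rw [Matrix.single_apply_of_ne (h := h), conjTranspose_apply]
    rw [Matrix.single_apply_of_ne]
    · simp
    · tauto

lemma stdB_mul (a b c d : Fin n) :
    Matrix.single a b (1:ℂ) * Matrix.single c d 1
      = if b = c then Matrix.single a d 1 else 0 := by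
  by_cases h : b = c
  · subst h; simp
  · simp [Matrix.single_mul_single_of_ne (h := h), h]

lemma stdB_trace (a b : Fin n) :
    (Matrix.single a b (1:ℂ)).trace = if a = b then 1 else 0 := by
  by_cases h : a = b
  · subst h; simp
  · simp [Matrix.trace_single_eq_of_ne (h := h), h]

lemma ite_kron (P : Prop) [Decidable P] (X : Matrix (Fin n) (Fin n) ℂ)
    (M : Matrix (Fin n) (Fin n) ℂ) :
    ((if P then X else 0) ⊗ₖ M) = if P then X ⊗ₖ M else 0 := by
  split <;> simp [Matrix.zero_kronecker]

def Wm : Matrix (Fin n × Fin n) (Fin n × Fin n) ℂ :=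
  ∑ i, ∑ j, (Matrix.single i j (1 : ℂ)) ⊗ₖ W i j

lemma Wm_apply (p q : Fin n × Fin n) : Wm W p q = W p.1 q.1 p.2 q.2 := by
  simp [Wm, Matrix.sum_apply, Matrix.single, Matrix.of_apply,
    Finset.sum_ite_eq, ite_and]

lemma star_Wm : star (Wm W) = ∑ i, ∑ j, (Matrix.single j i (1 : ℂ)) ⊗ₖ (W i j)ᴴ := by
  simp only [Wm, star_sum]
  refine Finset.sum_congr rfl fun i _ => Finset.sum_congr rfl fun j _ => ?_
  show (Matrix.single i j (1:ℂ) ⊗ₖ W i j)ᴴ = _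
  rw [kron_conjT, stdB_conjT]

/-- The sesquilinear form `Fq A B = ∑_{pq} Tr(W_{pq} A* W_{pq}* B)`. -/
def Fq (A B : Matrix (Fin n) (Fin n) ℂ) : ℂ :=
  ∑ p : Fin n, ∑ q : Fin n, ((W p q) * Aᴴ * (W p q)ᴴ * B).trace

lemma trace_eq_Fq (A B : Matrix (Fin n) (Fin n) ℂ) :
    (star (Wm W * ((1 : Matrix (Fin n) (Fin n) ℂ) ⊗ₖ A) * star (Wm W)) *
      ((1 : Matrix (Fin n) (Fin n) ℂ) ⊗ₖ B)).trace = Fq W A B := by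
  rw [StarMul.star_mul, star_star, StarMul.star_mul]
  have hsA : star ((1 : Matrix (Fin n) (Fin n) ℂ) ⊗ₖ A) = (1 : Matrix (Fin n) (Fin n) ℂ) ⊗ₖ Aᴴ := by
    show ((1 : Matrix (Fin n) (Fin n) ℂ) ⊗ₖ A)ᴴ = _
    rw [kron_conjT, conjTranspose_one]
  rw [hsA, star_Wm, Wm]
  simp only [Finset.sum_mul, Finset.mul_sum, trace_sum, ← Matrix.mul_kronecker_mul,
    Matrix.one_mul, Matrix.mul_one]
  simp only [stdB_mul, ite_kron, apply_ite Matrix.trace, Matrix.trace_zero,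
    trace_kronecker, stdB_trace, ite_mul, one_mul, zero_mul,
    Finset.sum_ite_eq, Finset.sum_ite_eq', Finset.mem_univ, if_true]
  simp only [Fq, Matrix.mul_assoc]

lemma sum_swap4 (f : Fin n → Fin n → Fin n → Fin n → ℂ) :
    ∑ p, ∑ q, ∑ y, ∑ x, f p q y x = ∑ y, ∑ x, ∑ p, ∑ q, f p q y x := by
  have := Finset.sum_comm (s := (Finset.univ : Finset (Fin n × Fin n)))
      (t := (Finset.univ : Finset (Fin n × Fin n)))
      (f := fun z w => f z.1 z.2 w.1 w.2)
  simpa [Fintype.sum_prod_type] using this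

lemma M1 (h1 : Wm W * star (Wm W) = 1) :
    ∑ p : Fin n, ∑ q : Fin n, W p q * (W p q)ᴴ = (n : ℂ) • 1 := by
  ext a c
  have key : ∀ p : Fin n, (∑ q : Fin n, ∑ b : Fin n, W p q a b * (starRingEnd ℂ) (W p q c b))
      = if a = c then 1 else 0 := by
    intro p
    have := congrFun (congrFun h1 (p, a)) (p, c)
    simpa [Matrix.mul_apply, Wm_apply, Matrix.star_apply, Fintype.sum_prod_type,
      Matrix.one_apply, Prod.ext_iff] using this
  have lhs : (∑ p : Fin n, ∑ q : Fin n, W p q * (W p q)ᴴ) a c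
      = ∑ p : Fin n, ∑ q : Fin n, ∑ b : Fin n, W p q a b * (starRingEnd ℂ) (W p q c b) := by
    simp [Matrix.sum_apply, Matrix.mul_apply, Matrix.conjTranspose_apply]
  rw [lhs]
  simp only [key]
  by_cases h : a = c <;> simp [h, Matrix.one_apply]

lemma M2 (h2 : star (Wm W) * Wm W = 1) :
    ∑ p : Fin n, ∑ q : Fin n, (W p q)ᴴ * W p q = (n : ℂ) • 1 := by
  ext b d
  have key : ∀ q : Fin n, (∑ p : Fin n, ∑ a : Fin n, (starRingEnd ℂ) (W p q a b) * W p q a d)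
      = if b = d then 1 else 0 := by
    intro q
    have := congrFun (congrFun h2 (q, b)) (q, d)
    simpa [Matrix.mul_apply, Wm_apply, Matrix.star_apply, Fintype.sum_prod_type,
      Matrix.one_apply, Prod.ext_iff] using this
  have lhs : (∑ p : Fin n, ∑ q : Fin n, (W p q)ᴴ * W p q) b d
      = ∑ q : Fin n, ∑ p : Fin n, ∑ a : Fin n, (starRingEnd ℂ) (W p q a b) * W p q a d := by
    rw [Finset.sum_comm]
    simp [Matrix.sum_apply, Matrix.mul_apply, Matrix.conjTranspose_apply]
  rw [lhs]
  simp only [key]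
  by_cases h : b = d <;> simp [h, Matrix.one_apply]

lemma Fq_sub_left (A A' B : Matrix (Fin n) (Fin n) ℂ) :
    Fq W (A - A') B = Fq W A B - Fq W A' B := by
  simp [Fq, conjTranspose_sub, Matrix.sub_mul, Matrix.mul_sub, trace_sub,
    Finset.sum_sub_distrib]

lemma Fq_sub_right (A B B' : Matrix (Fin n) (Fin n) ℂ) :
    Fq W A (B - B') = Fq W A B - Fq W A B' := by
  simp [Fq, Matrix.mul_sub, trace_sub, Finset.sum_sub_distrib]

lemma Fq_smul_left (c : ℂ) (A B : Matrix (Fin n) (Fin n) ℂ) :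
    Fq W (c • A) B = (starRingEnd ℂ) c * Fq W A B := by
  simp [Fq, conjTranspose_smul, Matrix.mul_smul, Matrix.smul_mul, trace_smul,
    Finset.mul_sum, smul_eq_mul]

lemma Fq_smul_right (c : ℂ) (A B : Matrix (Fin n) (Fin n) ℂ) :
    Fq W A (c • B) = c * Fq W A B := by
  simp [Fq, Matrix.mul_smul, trace_smul, Finset.mul_sum, smul_eq_mul]

lemma Fq_one_right (h2 : star (Wm W) * Wm W = 1) (A : Matrix (Fin n) (Fin n) ℂ) :
    Fq W A 1 = (n : ℂ) * (starRingEnd ℂ) A.trace := by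
  have step : ∀ p q : Fin n, ((W p q) * Aᴴ * (W p q)ᴴ * 1).trace
      = (((W p q)ᴴ * W p q) * Aᴴ).trace := by
    intro p q
    rw [Matrix.mul_one, trace_mul_cycle, Matrix.mul_assoc]
  simp only [Fq, step, ← Matrix.trace_sum, ← Finset.sum_mul]
  rw [M2 W h2]
  simp [Matrix.smul_mul, trace_smul, trace_conjTranspose, smul_eq_mul]

lemma Fq_one_left (h1 : Wm W * star (Wm W) = 1) (B : Matrix (Fin n) (Fin n) ℂ) :
    Fq W 1 B = (n : ℂ) * B.trace := by
  have step : ∀ p q : Fin n, ((W p q) * (1:Matrix (Fin n) (Fin n) ℂ)ᴴ * (W p q)ᴴ * B).trace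
      = (((W p q) * (W p q)ᴴ) * B).trace := by
    intro p q
    rw [conjTranspose_one, Matrix.mul_one]
  simp only [Fq, step, ← Matrix.trace_sum, ← Finset.sum_mul]
  rw [M1 W h1]
  simp [Matrix.smul_mul, trace_smul, smul_eq_mul]

/-- The "columns orthonormal" condition. -/
def SId : Prop := ∀ a b c d : Fin n,
  (∑ p : Fin n, ∑ q : Fin n, (starRingEnd ℂ) (W p q a b) * W p q c d)
    = if a = c ∧ b = d then 1 else 0

lemma Phi_eq (hS : SId W) (M : Matrix (Fin n) (Fin n) ℂ) :
    ∑ p : Fin n, ∑ q : Fin n, W p q * M * (W p q)ᴴ = M.trace • (1 : Matrix (Fin n) (Fin n) ℂ) := by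
  ext s u
  have lhs : (∑ p : Fin n, ∑ q : Fin n, W p q * M * (W p q)ᴴ) s u
      = ∑ p : Fin n, ∑ q : Fin n, ∑ y : Fin n, ∑ x : Fin n,
          W p q s x * M x y * (starRingEnd ℂ) (W p q u y) := by
    simp [Matrix.sum_apply, Matrix.mul_apply, Matrix.conjTranspose_apply, Finset.sum_mul]
  rw [lhs, sum_swap4]
  have inner : ∀ y x : Fin n,
      (∑ p : Fin n, ∑ q : Fin n, W p q s x * M x y * (starRingEnd ℂ) (W p q u y))
      = M x y * (if u = s ∧ y = x then 1 else 0) := by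
    intro y x
    rw [← hS u y s x, Finset.mul_sum]
    refine Finset.sum_congr rfl fun p _ => ?_
    rw [Finset.mul_sum]
    exact Finset.sum_congr rfl fun q _ => by ring
  simp only [inner]
  by_cases h : u = s
  · subst h
    simp [Matrix.trace, Matrix.diag, ite_and, mul_ite, mul_one, mul_zero,
      Finset.sum_ite_eq, Matrix.one_apply]
  · simp [h, Ne.symm h, Matrix.one_apply]

lemma Fq_eq_of_SId (hS : SId W) (A B : Matrix (Fin n) (Fin n) ℂ) :
    Fq W A B = (starRingEnd ℂ) A.trace * B.trace := by
  have : Fq W A B = ((∑ p : Fin n, ∑ q : Fin n, W p q * Aᴴ * (W p q)ᴴ) * B).trace := by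
    simp only [Fq, ← Matrix.trace_sum, ← Finset.sum_mul]
  rw [this, Phi_eq W hS Aᴴ]
  simp [Matrix.smul_mul, trace_smul, trace_conjTranspose, smul_eq_mul]

lemma trace_mul_stdB (Y : Matrix (Fin n) (Fin n) ℂ) (a c : Fin n) :
    (Y * Matrix.single a c 1).trace = Y c a := by
  simp [Matrix.trace, Matrix.diag, Matrix.mul_apply, Matrix.single,
    ite_and, Finset.sum_ite_eq, Matrix.of_apply]

lemma SId_of_Fq (hFq : ∀ A B : Matrix (Fin n) (Fin n) ℂ,
    Fq W A B = (starRingEnd ℂ) A.trace * B.trace) : SId W := by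
  intro a b c d
  have h := hFq (Matrix.single b d 1) (Matrix.single a c 1)
  have lhs : Fq W (Matrix.single b d 1) (Matrix.single a c 1)
      = ∑ p : Fin n, ∑ q : Fin n, (starRingEnd ℂ) (W p q a b) * W p q c d := by
    simp only [Fq, stdB_conjT]
    refine Finset.sum_congr rfl fun p _ => Finset.sum_congr rfl fun q _ => ?_
    rw [trace_mul_stdB]
    simp [Matrix.mul_apply, Matrix.conjTranspose_apply, Matrix.single,
      Matrix.of_apply, ite_and, Finset.sum_ite_eq, mul_comm]
  have rhs : (starRingEnd ℂ) (Matrix.single b d (1:ℂ)).trace * (Matrix.single a c (1:ℂ)).trace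
      = if a = c ∧ b = d then 1 else 0 := by
    rw [stdB_trace, stdB_trace]
    by_cases h1 : a = c <;> by_cases h2 : b = d <;> simp [h1, h2]
  rw [lhs, rhs] at h
  exact h

def V : Matrix (Fin n × Fin n) (Fin n × Fin n) ℂ :=
  Matrix.of fun p q => W p.1 p.2 q.1 q.2

/-- The orthonormality condition from the theorem statement. -/
def Ortho : Prop := ∀ i j k l : Fin n,
  ((W i j)ᴴ * W k l).trace = if i = k ∧ j = l then (1 : ℂ) else 0

lemma VhV_of_SId (hS : SId W) : (V W)ᴴ * V W = 1 := by
  ext ⟨a, b⟩ ⟨c, d⟩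
  have := hS a b c d
  simpa [Matrix.mul_apply, Matrix.conjTranspose_apply, V, Fintype.sum_prod_type,
    Matrix.one_apply, Prod.ext_iff] using this

lemma SId_of_VhV (h : (V W)ᴴ * V W = 1) : SId W := by
  intro a b c d
  have := congrFun (congrFun h (a, b)) (c, d)
  simpa [Matrix.mul_apply, Matrix.conjTranspose_apply, V, Fintype.sum_prod_type,
    Matrix.one_apply, Prod.ext_iff] using this

lemma VVh_of_Ortho (hO : Ortho W) : V W * (V W)ᴴ = 1 := by
  ext ⟨k, l⟩ ⟨i, j⟩
  have := hO i j k l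
  have tr : ((W i j)ᴴ * W k l).trace
      = ∑ a : Fin n, ∑ b : Fin n, W k l a b * (starRingEnd ℂ) (W i j a b) := by
    rw [Finset.sum_comm]
    simp only [Matrix.trace, Matrix.diag, Matrix.mul_apply, Matrix.conjTranspose_apply]
    exact Finset.sum_congr rfl fun b _ => Finset.sum_congr rfl fun a _ =>
      (mul_comm _ _ : star (W i j a b) * W k l a b = _)
  rw [tr] at this
  simpa [Matrix.mul_apply, Matrix.conjTranspose_apply, V, Fintype.sum_prod_type,
    Matrix.one_apply, Prod.ext_iff, and_comm, eq_comm] using this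

lemma Ortho_of_VVh (h : V W * (V W)ᴴ = 1) : Ortho W := by
  intro i j k l
  have := congrFun (congrFun h (k, l)) (i, j)
  have tr : ((W i j)ᴴ * W k l).trace
      = ∑ a : Fin n, ∑ b : Fin n, W k l a b * (starRingEnd ℂ) (W i j a b) := by
    rw [Finset.sum_comm]
    simp only [Matrix.trace, Matrix.diag, Matrix.mul_apply, Matrix.conjTranspose_apply]
    exact Finset.sum_congr rfl fun b _ => Finset.sum_congr rfl fun a _ =>
      (mul_comm _ _ : star (W i j a b) * W k l a b = _)
  rw [tr]
  simpa [Matrix.mul_apply, Matrix.conjTranspose_apply, V, Fintype.sum_prod_type,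
    Matrix.one_apply, Prod.ext_iff, and_comm, eq_comm] using this

lemma Ortho_of_SId (hS : SId W) : Ortho W :=
  Ortho_of_VVh W (mul_eq_one_comm.mp (VhV_of_SId W hS))

lemma SId_of_Ortho (hO : Ortho W) : SId W :=
  SId_of_VhV W (mul_eq_one_comm.mpr (VVh_of_Ortho W hO))

lemma span_of_SId (hS : SId W) :
    Submodule.span ℂ (Set.range fun p : Fin n × Fin n => W p.1 p.2) = ⊤ := by
  rw [eq_top_iff]
  intro M _
  have hM : M = ∑ p : Fin n × Fin n, (((W p.1 p.2)ᴴ * M).trace) • W p.1 p.2 := by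
    ext c d
    have rhs : (∑ p : Fin n × Fin n, (((W p.1 p.2)ᴴ * M).trace) • W p.1 p.2) c d
        = ∑ p : Fin n, ∑ q : Fin n, ∑ b : Fin n, ∑ a : Fin n,
            (starRingEnd ℂ) (W p q a b) * M a b * W p q c d := by
      simp [Matrix.sum_apply, Matrix.trace, Matrix.diag, Matrix.mul_apply,
        Matrix.conjTranspose_apply, Fintype.sum_prod_type, Finset.sum_mul]
    rw [rhs, sum_swap4]
    have inner : ∀ b a : Fin n,
        (∑ p : Fin n, ∑ q : Fin n, (starRingEnd ℂ) (W p q a b) * M a b * W p q c d)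
        = M a b * (if a = c ∧ b = d then 1 else 0) := by
      intro b a
      rw [← hS a b c d, Finset.mul_sum]
      refine Finset.sum_congr rfl fun p _ => ?_
      rw [Finset.mul_sum]
      exact Finset.sum_congr rfl fun q _ => by ring
    simp only [inner]
    rw [Finset.sum_comm]
    simp [ite_and, mul_ite, mul_one, mul_zero, Finset.sum_ite_eq, Finset.sum_ite_eq']
  rw [hM]
  exact Submodule.sum_mem _ fun p _ =>
    Submodule.smul_mem _ _ (Submodule.subset_span (Set.mem_range_self p))

end CompAux


/-- Let `W = Σ_{i,j} E_{ij} ⊗ W_{ij}` be a unitary in `Mₙ(ℂ) ⊗ Mₙ(ℂ)`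
(identified with `M_{n²}(ℂ)`).  The subalgebra `W (ℂI ⊗ Mₙ(ℂ)) W*` is complementary to
`ℂI ⊗ Mₙ(ℂ)` — i.e. their traceless parts are orthogonal for the Hilbert–Schmidt inner
product — if and only if `{W_{ij} : 1 ≤ i,j ≤ n}` is an orthonormal basis of `Mₙ(ℂ)`
with respect to the inner product `⟨A, B⟩ = Tr(A* B)`. -/
theorem complementary_iff_blocks_orthonormal_basis {n : ℕ}
    (W : Fin n → Fin n → Matrix (Fin n) (Fin n) ℂ)
    (hW : (∑ i, ∑ j, (Matrix.single i j (1 : ℂ)) ⊗ₖ W i j) ∈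
        unitary (Matrix (Fin n × Fin n) (Fin n × Fin n) ℂ)) :
    -- complementarity of `W(ℂI ⊗ Mₙ(ℂ))W*` and `ℂI ⊗ Mₙ(ℂ)`:
    (∀ A B : Matrix (Fin n) (Fin n) ℂ, A.trace = 0 → B.trace = 0 →
        hsInner
          ((∑ i, ∑ j, (Matrix.single i j (1 : ℂ)) ⊗ₖ W i j) * ((1 : Matrix (Fin n) (Fin n) ℂ) ⊗ₖ A) *
            star (∑ i, ∑ j, (Matrix.single i j (1 : ℂ)) ⊗ₖ W i j))
          ((1 : Matrix (Fin n) (Fin n) ℂ) ⊗ₖ B) = 0)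
      ↔
    -- `{W_{ij}}` is an orthonormal basis of `Mₙ(ℂ)` for `⟨A, B⟩ = Tr(A* B)`:
    ((∀ i j k l : Fin n,
        ((W i j)ᴴ * W k l).trace = if i = k ∧ j = l then (1 : ℂ) else 0) ∧
      Submodule.span ℂ (Set.range fun p : Fin n × Fin n => W p.1 p.2) = ⊤) := by
  
  have e : (∑ i, ∑ j, (Matrix.single i j (1 : ℂ)) ⊗ₖ W i j) = CompAux.Wm W := rfl
  rw [e] at hW ⊢
  have h1 : CompAux.Wm W * star (CompAux.Wm W) = 1 := hW.2
  have h2 : star (CompAux.Wm W) * CompAux.Wm W = 1 := hW.1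
  constructor
  · intro h
    rcases Nat.eq_zero_or_pos n with hn | hn
    · subst hn
      exact ⟨fun i => i.elim0, Subsingleton.elim _ _⟩
    · have hn' : (n : ℂ) ≠ 0 := Nat.cast_ne_zero.mpr hn.ne'
      have hF0 : ∀ A B : Matrix (Fin n) (Fin n) ℂ,
          A.trace = 0 → B.trace = 0 → CompAux.Fq W A B = 0 := by
        intro A B hA hB
        have hh := h A B hA hB
        rw [hsInner, CompAux.trace_eq_Fq] at hh
        have hcard : ((Fintype.card (Fin n × Fin n) : ℂ)) ≠ 0 := by
          simp [Fintype.card_prod]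
          exact fun h => hn.ne' h
        exact (div_eq_zero_iff.mp hh).resolve_right hcard
      have hFq : ∀ A B : Matrix (Fin n) (Fin n) ℂ,
          CompAux.Fq W A B = (starRingEnd ℂ) A.trace * B.trace := by
        intro A B
        have hA0 : (A - (A.trace / n) • 1).trace = 0 := by
          rw [trace_sub, trace_smul, trace_one]
          simp [smul_eq_mul, Fintype.card_fin]
          field_simp
          ring
        have hB0 : (B - (B.trace / n) • 1).trace = 0 := by
          rw [trace_sub, trace_smul, trace_one]
          simp [smul_eq_mul, Fintype.card_fin]
          field_simp
          ring
        have h0 := hF0 _ _ hA0 hB0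
        simp only [CompAux.Fq_sub_left, CompAux.Fq_sub_right, CompAux.Fq_smul_left, CompAux.Fq_smul_right,
          CompAux.Fq_one_left W h1, CompAux.Fq_one_right W h2, trace_one, Fintype.card_fin,
          map_div₀, map_natCast, _root_.map_one] at h0
        rw [hA0, map_zero] at h0
        field_simp at h0
        have h3 : (n : ℂ) * (CompAux.Fq W A B - (starRingEnd ℂ) A.trace * B.trace) = 0 := by
          linear_combination (n : ℂ) * h0
        exact sub_eq_zero.mp ((mul_eq_zero.mp h3).resolve_left hn')
      have hS := CompAux.SId_of_Fq W hFq
      exact ⟨CompAux.Ortho_of_SId W hS, CompAux.span_of_SId W hS⟩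
  · rintro ⟨hO, -⟩ A B hA hB
    have hS := CompAux.SId_of_Ortho W hO
    have hfq := CompAux.Fq_eq_of_SId W hS A B
    rw [hsInner, CompAux.trace_eq_Fq, hfq, hA, hB]
    simp
end
end

section
/- Let A¹ and A² be unital *-subalgebras of M_m(ℂ) such that all minimal projections of A¹ have equal trace and all minimal projections of A² have equal trace. Then the following are equivalent: (i) for every minimal projection P ∈ A¹ and every minimal projection Q ∈ A², Tr(PQ) = (Tr P)(Tr Q)/m; (ii) the traceless subspaces of A¹ and A² are orthogonal with respect to the Hilbert–Schmidt inner product ⟨A,B⟩ = τ(A*B), where τ = (1/m)Tr. -/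
noncomputable section

/-- `p` is a projection belonging to the subalgebra `A`: `p = p² = p*`. -/
def IsProjectionIn {m : ℕ} (A : StarSubalgebra ℂ (Matrix (Fin m) (Fin m) ℂ))
    (p : Matrix (Fin m) (Fin m) ℂ) : Prop :=
  p ∈ A ∧ p * p = p ∧ star p = p

/-- `p` is a minimal projection of the subalgebra `A`: it is a nonzero projection in `A`
and the only projections `q ∈ A` with `q ≤ p` (i.e. `p q = q p = q`) are `0` and `p`. -/
def IsMinimalProjectionIn {m : ℕ} (A : StarSubalgebra ℂ (Matrix (Fin m) (Fin m) ℂ))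
    (p : Matrix (Fin m) (Fin m) ℂ) : Prop :=
  IsProjectionIn A p ∧ p ≠ 0 ∧
    ∀ q, IsProjectionIn A q → p * q = q → q * p = q → q = 0 ∨ q = p

/-!
Both conditions say that `τ(a b) = τ(a) τ(b)` for `a ∈ A₁`, `b ∈ A₂` (with `τ = Tr / m`), tested
on different sets of elements. For (ii) ⇒ (i), apply (ii) to the traceless elements
`m p - Tr p • 1` and `m q - Tr q • 1`. For (i) ⇒ (ii), note that both sides of
`m Tr(a b) = Tr a Tr b` are bilinear and that a *-subalgebra of matrices is spanned by its minimal
projections: its self-adjoint elements are combinations of their spectral projections, which lie in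
the subalgebra since it is closed, and a projection that is not minimal splits as `q + (p - q)`
with both summands of smaller rank.
-/

open Matrix ComplexStarModule

section SpectralProjections

variable {A : Type*} [Ring A] [StarRing A] [Algebra ℝ A] [TopologicalSpace A]
  [ContinuousFunctionalCalculus ℝ A IsSelfAdjoint] {a : A}

theorem isStarProjection_cfc_indicator (hfin : (spectrum ℝ a).Finite) (μ : ℝ) :
    IsStarProjection (cfc (fun x => if x = μ then (1 : ℝ) else 0) a) := by
  refine ⟨?_, cfc_predicate _ a⟩
  rw [IsIdempotentElem, ← cfc_mul _ _ a (hfin.continuousOn _) (hfin.continuousOn _)]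
  exact cfc_congr fun x _ => by split_ifs <;> simp

theorem IsSelfAdjoint.eq_sum_smul_cfc_indicator (ha : IsSelfAdjoint a)
    (hfin : (spectrum ℝ a).Finite) :
    a = ∑ μ ∈ hfin.toFinset, μ • cfc (fun x => if x = μ then (1 : ℝ) else 0) a := by
  calc a = cfc (fun x => ∑ μ ∈ hfin.toFinset, μ • if x = μ then (1 : ℝ) else 0) a := by
        conv_lhs => rw [← cfc_id' ℝ a]
        exact cfc_congr fun x hx => by simp [hfin.mem_toFinset.mpr hx]
    _ = _ := by
        rw [← Finset.sum_fn, cfc_sum _ _ _ fun μ _ => hfin.continuousOn _]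
        exact Finset.sum_congr rfl fun μ _ => cfc_smul μ _ a (hfin.continuousOn _)

end SpectralProjections

section Trace

variable {n R : Type*} [Fintype n] [DecidableEq n]

theorem Matrix.rank_eq_zero_iff {l : Type*} [Field R] {p : Matrix l n R} :
    p.rank = 0 ↔ p = 0 := by
  rw [Matrix.rank, Submodule.finrank_eq_zero, LinearMap.range_eq_bot, ← Matrix.toLin'_apply',
    LinearEquiv.map_eq_zero_iff]

theorem Matrix.trace_eq_rank_of_isIdempotentElem [Field R] {p : Matrix n n R}
    (hp : IsIdempotentElem p) : p.trace = p.rank := by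
  have hlin : IsIdempotentElem (toLin' p) := hp.map Matrix.toLinAlgEquiv'
  rw [← Matrix.trace_toLin'_eq, (LinearMap.IsIdempotentElem.isProj_range _ hlin).trace]
  rfl

theorem Matrix.rank_add_rank_sub_of_isIdempotentElem [Field R] [CharZero R] {p q : Matrix n n R}
    (hp : IsIdempotentElem p) (hq : IsIdempotentElem q) (hpq : IsIdempotentElem (p - q)) :
    q.rank + (p - q).rank = p.rank := by
  have htrace := congrArg Matrix.trace (add_sub_cancel q p)
  rw [trace_add, trace_eq_rank_of_isIdempotentElem hp, trace_eq_rank_of_isIdempotentElem hq,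
    trace_eq_rank_of_isIdempotentElem hpq] at htrace
  exact_mod_cast htrace

variable [CommRing R]

theorem Matrix.mul_trace_mul_eq_of_mem_span (c : R) {s t : Set (Matrix n n R)}
    (h : ∀ p ∈ s, ∀ q ∈ t, c * (p * q).trace = p.trace * q.trace) {a b : Matrix n n R}
    (ha : a ∈ Submodule.span R s) (hb : b ∈ Submodule.span R t) :
    c * (a * b).trace = a.trace * b.trace := by
  induction ha, hb using Submodule.span_induction₂ with
  | mem_mem p q hp hq => exact h p hp q hq
  | zero_left => simp
  | zero_right => simp
  | add_left _ _ _ _ _ _ h₁ h₂ => rw [add_mul, trace_add, trace_add, mul_add, h₁, h₂, add_mul]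
  | add_right _ _ _ _ _ _ h₁ h₂ => rw [mul_add, trace_add, trace_add, mul_add, h₁, h₂, mul_add]
  | smul_left r _ _ _ _ h₁ =>
    rw [smul_mul, trace_smul, trace_smul, smul_eq_mul, smul_eq_mul, mul_left_comm, h₁, mul_assoc]
  | smul_right r _ _ _ _ h₁ =>
    rw [Matrix.mul_smul, trace_smul, trace_smul, smul_eq_mul, smul_eq_mul, mul_left_comm, h₁,
      mul_left_comm]

theorem Matrix.trace_card_smul_sub_trace_smul_one (a : Matrix n n R) :
    ((Fintype.card n : R) • a - a.trace • 1).trace = 0 := by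
  rw [trace_sub, trace_smul, trace_smul, trace_one, smul_eq_mul, smul_eq_mul, mul_comm, sub_self]

theorem Matrix.trace_card_smul_sub_trace_smul_one_mul (a b : Matrix n n R) :
    (((Fintype.card n : R) • a - a.trace • 1) * ((Fintype.card n : R) • b - b.trace • 1)).trace =
      Fintype.card n * (Fintype.card n * (a * b).trace - a.trace * b.trace) := by
  simp only [sub_mul, mul_sub, smul_mul, Matrix.mul_smul, mul_one, one_mul, trace_sub, trace_smul,
    trace_one, smul_eq_mul]
  ring

end Trace

section MinimalProjections

variable {m : ℕ} {A : StarSubalgebra ℂ (Matrix (Fin m) (Fin m) ℂ)}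

theorem isProjectionIn_iff {p : Matrix (Fin m) (Fin m) ℂ} :
    IsProjectionIn A p ↔ p ∈ A ∧ IsStarProjection p := by
  rw [isStarProjection_iff]
  rfl

theorem IsProjectionIn.mem_span_isMinimalProjectionIn {p : Matrix (Fin m) (Fin m) ℂ}
    (hp : IsProjectionIn A p) : p ∈ Submodule.span ℂ {q | IsMinimalProjectionIn A q} := by
  induction hr : p.rank using Nat.strong_induction_on generalizing p with
  | _ r ih =>
  by_cases hmin : IsMinimalProjectionIn A p
  · exact Submodule.subset_span hmin
  by_cases hp0 : p = 0
  · simp [hp0]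
  obtain ⟨q, hq, -, hqp, hq0, hqp'⟩ : ∃ q, IsProjectionIn A q ∧ p * q = q ∧ q * p = q ∧
      q ≠ 0 ∧ q ≠ p := by
    simpa [IsMinimalProjectionIn, hp, hp0] using hmin
  rw [isProjectionIn_iff] at hp hq
  have hsub : IsProjectionIn A (p - q) :=
    isProjectionIn_iff.mpr ⟨sub_mem hp.1 hq.1, hq.2.sub_of_mul_eq_left hp.2 hqp⟩
  have hrank := rank_add_rank_sub_of_isIdempotentElem hp.2.1 hq.2.1 hsub.2.1
  have hq_pos : q.rank ≠ 0 := rank_eq_zero_iff.not.mpr hq0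
  have hsub_pos : (p - q).rank ≠ 0 := rank_eq_zero_iff.not.mpr (sub_ne_zero.mpr hqp'.symm)
  rw [← add_sub_cancel q p]
  exact add_mem (ih _ (by omega) (isProjectionIn_iff.mpr hq) rfl) (ih _ (by omega) hsub rfl)

theorem IsSelfAdjoint.mem_span_isProjectionIn {x : Matrix (Fin m) (Fin m) ℂ} (hxA : x ∈ A)
    (hx : IsSelfAdjoint x) : x ∈ Submodule.span ℂ {p | IsProjectionIn A p} := by
  have : IsClosed (A : Set (Matrix (Fin m) (Fin m) ℂ)) :=
    A.toSubalgebra.toSubmodule.closed_of_finiteDimensional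
  rw [hx.eq_sum_smul_cfc_indicator finite_real_spectrum]
  refine Submodule.sum_mem _ fun μ _ => Submodule.smul_of_tower_mem _ μ (Submodule.subset_span ?_)
  exact isProjectionIn_iff.mpr
    ⟨cfc_mem (𝕜' := ℂ) _ hxA, isStarProjection_cfc_indicator finite_real_spectrum μ⟩

theorem mem_span_isMinimalProjectionIn {x : Matrix (Fin m) (Fin m) ℂ} (hx : x ∈ A) :
    x ∈ Submodule.span ℂ {p | IsMinimalProjectionIn A p} := by
  have hsa : ∀ y ∈ A, IsSelfAdjoint y → y ∈ Submodule.span ℂ {p | IsMinimalProjectionIn A p} :=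
    fun y hyA hy => Submodule.span_le.mpr (fun _ hp => hp.mem_span_isMinimalProjectionIn)
      (hy.mem_span_isProjectionIn hyA)
  have hstar : star x ∈ A := star_mem hx
  rw [← realPart_add_I_smul_imaginaryPart x]
  refine add_mem (hsa _ ?_ (ℜ x).2) (Submodule.smul_mem _ _ (hsa _ ?_ (ℑ x).2))
  · rw [realPart_apply_coe]
    exact A.toSubalgebra.toSubmodule.smul_of_tower_mem _ (add_mem hx hstar)
  · rw [imaginaryPart_apply_coe]
    exact A.toSubalgebra.toSubmodule.smul_of_tower_mem _ (A.smul_mem (sub_mem hx hstar) _)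

end MinimalProjections

theorem minimal_projection_trace_iff_traceless_orthogonal_general {m : ℕ}
    (A₁ A₂ : StarSubalgebra ℂ (Matrix (Fin m) (Fin m) ℂ)) :
    (∀ p q, IsMinimalProjectionIn A₁ p → IsMinimalProjectionIn A₂ q →
        (p * q).trace = p.trace * q.trace / (m : ℂ))
      ↔
    (∀ x ∈ A₁, ∀ y ∈ A₂, x.trace / (m : ℂ) = 0 → y.trace / (m : ℂ) = 0 →
        (star x * y).trace / (m : ℂ) = 0) := by
  rcases eq_or_ne (m : ℂ) 0 with hm | hm
  · obtain rfl : m = 0 := by exact_mod_cast hm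
    simp
  constructor
  · intro h x hx y hy _ hy0
    have hmul := mul_trace_mul_eq_of_mem_span (m : ℂ)
      (fun p hp q hq => by rw [h p q hp hq]; field_simp)
      (mem_span_isMinimalProjectionIn (star_mem hx)) (mem_span_isMinimalProjectionIn hy)
    rw [div_eq_zero_iff, or_iff_left hm] at hy0
    rw [hy0, mul_zero, mul_eq_zero, or_iff_right hm] at hmul
    rw [hmul, zero_div]
  · rintro h p q ⟨⟨hpA, -, hp_star⟩, -⟩ ⟨⟨hqA, -, -⟩, -⟩
    set x := (Fintype.card (Fin m) : ℂ) • p - p.trace • 1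
    set y := (Fintype.card (Fin m) : ℂ) • q - q.trace • 1
    have hx : star x = x := by
      rw [star_sub, star_smul, star_smul, star_one, star_natCast, hp_star, ← trace_conjTranspose,
        ← star_eq_conjTranspose, hp_star]
    have hxy := h x (sub_mem (A₁.smul_mem hpA _) (A₁.smul_mem (one_mem _) _))
      y (sub_mem (A₂.smul_mem hqA _) (A₂.smul_mem (one_mem _) _))
      (by rw [trace_card_smul_sub_trace_smul_one, zero_div])
      (by rw [trace_card_smul_sub_trace_smul_one, zero_div])
    rw [hx, trace_card_smul_sub_trace_smul_one_mul, Fintype.card_fin] at hxy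
    field_simp at hxy ⊢
    linear_combination hxy

/-- Let `A¹, A²` be unital *-subalgebras of `M_m(ℂ)` in which all minimal
projections have equal trace.  Then the following are equivalent:
(i) `Tr(PQ) = (Tr P)(Tr Q)/m` for all minimal projections `P ∈ A¹`, `Q ∈ A²`;
(ii) the traceless subspaces of `A¹` and `A²` are orthogonal for the Hilbert–Schmidt
inner product `⟨A, B⟩ = τ(A* B)`, `τ = (1/m) Tr`. -/
theorem minimal_projection_trace_iff_traceless_orthogonal {m : ℕ}
    (A₁ A₂ : StarSubalgebra ℂ (Matrix (Fin m) (Fin m) ℂ))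
    (h₁ : ∀ p q, IsMinimalProjectionIn A₁ p → IsMinimalProjectionIn A₁ q →
      p.trace = q.trace)
    (h₂ : ∀ p q, IsMinimalProjectionIn A₂ p → IsMinimalProjectionIn A₂ q →
      p.trace = q.trace) :
    (∀ p q, IsMinimalProjectionIn A₁ p → IsMinimalProjectionIn A₂ q →
        (p * q).trace = p.trace * q.trace / (m : ℂ))
      ↔
    (∀ x ∈ A₁, ∀ y ∈ A₂, x.trace / (m : ℂ) = 0 → y.trace / (m : ℂ) = 0 →
        (star x * y).trace / (m : ℂ) = 0) :=
  minimal_projection_trace_iff_traceless_orthogonal_general A₁ A₂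
end
end
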